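/- arXiv:2204.10493 — 2 statements merged into one kernel-verified Lean document; each statement's English description precedes it below -/
import Mathlib

section
/- Let 𝓗, 𝓙 be interval queues, I a nondegenerate interval of nonnegative reals, z a signal, φ₁, φ₂ MITL formulas. If ⋃𝓗 ⊆ T(φ₁) and ⋃𝓙 ⊆ T(φ₂), then ⋃_{H∈𝓗} ⋃_{J∈𝓙} ( ((Cl(H) ∩ J) ⊖ I) ∩ Cl(H) ) ⊆ T(φ₁ U_I φ₂). -/
open Set

def IsIntervalQueue (Q : Set (Set ℝ)) : Prop :=
  Q.Finite ∧ (∀ I ∈ Q, I.Nonempty ∧ Convex ℝ I ∧ I ⊆ Set.Ici 0) ∧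
    Q.Pairwise (fun A B => A ∩ closure B = ∅ ∧ B ∩ closure A = ∅)
def minkDiff (B A : Set ℝ) : Set ℝ := {x | ∃ b ∈ B, ∃ a ∈ A, x = b - a}
inductive MITL (G : Type) where
  | top : MITL G
  | atom (g : G) : MITL G
  | neg (φ : MITL G) : MITL G
  | conj (φ ψ : MITL G) : MITL G
  | untl (I : Set ℝ) (φ ψ : MITL G) : MITL G

def Sat {G : Type} (z : ℝ → Set G) : ℝ → MITL G → Prop
  | _, .top => True
  | t, .atom g => g ∈ z t
  | t, .neg φ => ¬ Sat z t φ
  | t, .conj φ ψ => Sat z t φ ∧ Sat z t ψ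
  | t, .untl I φ ψ =>
      ∃ t₂ ∈ I, Sat z (t + t₂) ψ ∧ ∀ t₁ ∈ Set.Ioo 0 t₂, Sat z (t + t₁) φ

def TruthSet {G : Type} (z : ℝ → Set G) (φ : MITL G) : Set ℝ :=
  {t | 0 ≤ t ∧ Sat z t φ}

lemma mem_of_convex_between {H : Set ℝ} (hH : Convex ℝ H) {t b x : ℝ}
    (ht : t ∈ closure H) (hb : b ∈ closure H) (h1 : t < x) (h2 : x < b) : x ∈ H := by
  obtain ⟨h1', hh1, hd1⟩ := Metric.mem_closure_iff.1 ht (x - t) (by linarith)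
  obtain ⟨h2', hh2, hd2⟩ := Metric.mem_closure_iff.1 hb (b - x) (by linarith)
  rw [Real.dist_eq, abs_lt] at hd1 hd2
  exact hH.ordConnected.out hh1 hh2 ⟨by linarith, by linarith⟩

theorem until_subcover {G : Type} (z : ℝ → Set G) (φ₁ φ₂ : MITL G)
    (Hq Jq : Set (Set ℝ)) (hHq : IsIntervalQueue Hq) (hJq : IsIntervalQueue Jq)
    (I : Set ℝ) (hIconv : Convex ℝ I) (hI0 : I ⊆ Set.Ici 0) (hInd : I.Nontrivial)
    (h1 : ⋃₀ Hq ⊆ TruthSet z φ₁) (h2 : ⋃₀ Jq ⊆ TruthSet z φ₂) :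
    (⋃ H ∈ Hq, ⋃ J ∈ Jq, (minkDiff (closure H ∩ J) I ∩ closure H)) ⊆
      TruthSet z (.untl I φ₁ φ₂) := by
  intro t ht
  simp only [Set.mem_iUnion] at ht
  obtain ⟨H, hHmem, J, hJmem, htmink, htcl⟩ := ht
  obtain ⟨b, ⟨hbcl, hbJ⟩, a, haI, rfl⟩ := htmink
  obtain ⟨-, hHconv, hHpos⟩ := hHq.2.1 H hHmem
  have ht0 : (0:ℝ) ≤ b - a :=
    closure_minimal hHpos isClosed_Ici htcl
  obtain ⟨hb0, hbSat⟩ := h2 ⟨J, hJmem, hbJ⟩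
  refine ⟨ht0, a, haI, by simpa using hbSat, ?_⟩
  intro t₁ ⟨ht₁0, ht₁a⟩
  have hx : b - a + t₁ ∈ H :=
    mem_of_convex_between hHconv htcl hbcl (by linarith) (by linarith)
  exact (h1 ⟨H, hHmem, hx⟩).2
end

section
/- Let 𝓘 = {I₁, ..., Iₘ} be a nonempty interval queue sorted so that I₁ ≺ I₂ ≺ ... ≺ Iₘ (every point of Iₖ is strictly less than every point of Iₖ₊₁). Then the union of the sets ←I₁, →Iₖ ∩ ←Iₖ₊₁ for k ∈ {1,...,m−1}, and →Iₘ equals [0,∞) \ ⋃𝓘, where →B := {t ≥ 0 | ∀b ∈ B, t > b} and ←A := {t ≥ 0 | ∀a ∈ A, t < a}. -/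
open Set

def SepSets {X : Type*} [TopologicalSpace X] (A B : Set X) : Prop :=
  A ∩ closure B = ∅ ∧ B ∩ closure A = ∅

def rightOf (B : Set ℝ) : Set ℝ := {t | 0 ≤ t ∧ ∀ b ∈ B, b < t}

def leftOf (A : Set ℝ) : Set ℝ := {t | 0 ≤ t ∧ ∀ a ∈ A, t < a}

theorem complement_of_sorted_interval_queue (m : ℕ) (I : Fin (m + 1) → Set ℝ)
    (hne : ∀ k, (I k).Nonempty) (hconv : ∀ k, Convex ℝ (I k))
    (hnn : ∀ k, I k ⊆ Set.Ici 0)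
    (hsep : ∀ k l, k ≠ l → SepSets (I k) (I l))
    (hsort : ∀ k l : Fin (m + 1), k < l → ∀ a ∈ I k, ∀ b ∈ I l, a < b) :
    leftOf (I 0) ∪ (⋃ k : Fin m, rightOf (I k.castSucc) ∩ leftOf (I k.succ)) ∪
        rightOf (I (Fin.last m))
      = Set.Ici 0 \ ⋃ k, I k := by
  ext t
  simp only [Set.mem_union, Set.mem_iUnion, Set.mem_inter_iff, Set.mem_diff, Set.mem_Ici,
    rightOf, leftOf, Set.mem_setOf_eq]
  constructor
  · rintro ((⟨ht0, hL⟩ | ⟨k, ⟨ht0, hR⟩, ⟨_, hL⟩⟩) | ⟨ht0, hR⟩)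
    · refine ⟨ht0, ?_⟩
      rintro ⟨l, hl⟩
      rcases eq_or_lt_of_le (Fin.zero_le l) with h | h
      · exact absurd (hL t (h ▸ hl)) (lt_irrefl t)
      · obtain ⟨a, ha⟩ := hne 0
        exact absurd (hsort 0 l h a ha t hl) (not_lt.2 (hL a ha).le)
    · refine ⟨ht0, ?_⟩
      rintro ⟨l, hl⟩
      rcases lt_trichotomy l k.castSucc with h | h | h
      · obtain ⟨b, hb⟩ := hne k.castSucc
        exact absurd (hsort l k.castSucc h t hl b hb) (not_lt.2 (hR b hb).le)
      · exact absurd (hR t (h ▸ hl)) (lt_irrefl t)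
      · have h' : k.succ ≤ l := by
          simp only [Fin.lt_def, Fin.coe_castSucc] at h
          simp only [Fin.le_def, Fin.val_succ]
          omega
        rcases eq_or_lt_of_le h' with h'' | h''
        · exact absurd (hL t (h'' ▸ hl)) (lt_irrefl t)
        · obtain ⟨b, hb⟩ := hne k.succ
          exact absurd (hsort k.succ l h'' b hb t hl) (not_lt.2 (hL b hb).le)
    · refine ⟨ht0, ?_⟩
      rintro ⟨l, hl⟩
      rcases eq_or_lt_of_le (Fin.le_last l) with h | h
      · exact absurd (hR t (h ▸ hl)) (lt_irrefl t)
      · obtain ⟨b, hb⟩ := hne (Fin.last m)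
        exact absurd (hsort l (Fin.last m) h t hl b hb) (not_lt.2 (hR b hb).le)
  · rintro ⟨ht0, hnm⟩
    have htk : ∀ k, t ∉ I k := fun k hk => hnm ⟨k, hk⟩
    -- dichotomy for each k
    classical
    have dich : ∀ k, (∀ a ∈ I k, a < t) ∨ (∀ a ∈ I k, t < a) := by
      intro k
      by_contra h
      push_neg at h
      obtain ⟨⟨a, ha, hta⟩, b, hb, htb⟩ := h
      exact htk k ((hconv k).ordConnected.out hb ha ⟨htb, hta⟩)
    set S : Finset (Fin (m + 1)) := Finset.univ.filter (fun k => ∀ a ∈ I k, a < t) with hS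
    by_cases h0 : (0 : Fin (m+1)) ∈ S
    · have hSne : S.Nonempty := ⟨0, h0⟩
      set M := S.max' hSne with hM
      have hMS : M ∈ S := S.max'_mem hSne
      have hMP : ∀ a ∈ I M, a < t := by
        have := Finset.mem_filter.1 hMS
        exact this.2
      by_cases hlast : M = Fin.last m
      · exact Or.inr ⟨ht0, hlast ▸ hMP⟩
      · have hMlt : (M : ℕ) < m := by
          have := Fin.lt_last_iff_ne_last.2 hlast
          exact this
        refine Or.inl (Or.inr ⟨⟨M, hMlt⟩, ⟨ht0, ?_⟩, ⟨ht0, ?_⟩⟩)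
        · have : (⟨M, hMlt⟩ : Fin m).castSucc = M := by
            simp [Fin.castSucc, Fin.ext_iff]
          rw [this]; exact hMP
        · set N := (⟨M, hMlt⟩ : Fin m).succ with hN
          have hNS : N ∉ S := by
            intro hNS
            have := S.le_max' N hNS
            have hMN : M < N := by
              simp [hN, Fin.lt_iff_val_lt_val]
            exact absurd (lt_of_lt_of_le hMN this) (lt_irrefl M)
          rcases dich N with hP | hQ
          · exact absurd (Finset.mem_filter.2 ⟨Finset.mem_univ N, hP⟩) hNS
          · exact hQ
    · rcases dich 0 with hP | hQ
      · exact absurd (Finset.mem_filter.2 ⟨Finset.mem_univ 0, hP⟩) h0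
      · exact Or.inl (Or.inl ⟨ht0, hQ⟩)
end
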